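/- For integers i ≥ 0 and 0 ≤ s ≤ 2^i − 1, define a(i,s) = ln 2 / ((2^i + s + 1) · ln(1 + 1/(2^{i+1} + 2s + 1))). Then a(i,s) < 2 ln 2 for all such i, s, and a(i,0) → 2 ln 2 as i → ∞. -/

import Mathlib

/-!
With `k = 2^(i+1) + 2s + 1` one has `a i s = 2 log 2 / ((k + 1) log (1 + 1/k))`. The factor
`(k + 1) log (1 + 1/k)` exceeds `1` for every `k > 0` (Padé bound `log (1 + y) > 2y/(y + 2)`) and
tends to `1` as `k → ∞`, which gives both the strict bound and the limit along `s = 0`.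
-/

open Filter

/-- a(i,s) = ln 2 / ((2^i + s + 1) · ln(1 + 1/(2^{i+1} + 2s + 1))) -/
noncomputable def a (i s : ℕ) : ℝ :=
  Real.log 2 /
    (((2 : ℝ) ^ i + s + 1) * Real.log (1 + 1 / ((2 : ℝ) ^ (i + 1) + 2 * s + 1)))

open Real Topology

lemma one_lt_add_one_mul_log_one_add_inv {x : ℝ} (hx : 0 < x) :
    1 < (x + 1) * log (1 + x⁻¹) := by
  have hpade := lt_log_one_add_of_pos (inv_pos.2 hx)
  calc (1 : ℝ) < (x + 1) * (2 * x⁻¹ / (x⁻¹ + 2)) := by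
        field_simp
        linarith
    _ < (x + 1) * log (1 + x⁻¹) := mul_lt_mul_of_pos_left hpade (by positivity)

lemma tendsto_add_one_mul_log_one_add_inv_atTop :
    Tendsto (fun x : ℝ => (x + 1) * log (1 + x⁻¹)) atTop (𝓝 1) := by
  have hmul : Tendsto (fun x : ℝ => x * log (1 + x⁻¹)) atTop (𝓝 1) := by
    simpa [one_div] using tendsto_mul_log_one_add_div_atTop 1
  have hlog : Tendsto (fun x : ℝ => log (1 + x⁻¹)) atTop (𝓝 0) := by
    have hbase : Tendsto (fun x : ℝ => 1 + x⁻¹) atTop (𝓝 1) := by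
      simpa using tendsto_const_nhds.add (tendsto_inv_atTop_zero (𝕜 := ℝ))
    simpa using hbase.log one_ne_zero
  simpa [add_mul] using hmul.add hlog

lemma a_eq_two_mul_log_two_div (i s : ℕ) :
    a i s = 2 * log 2 /
      (((2 : ℝ) ^ (i + 1) + 2 * s + 1 + 1) * log (1 + ((2 : ℝ) ^ (i + 1) + 2 * s + 1)⁻¹)) := by
  rw [a, one_div, pow_succ]
  field_simp
  ring

theorem apx_lt_two_log_two_and_tendsto :
    (∀ i s : ℕ, s ≤ 2 ^ i - 1 → a i s < 2 * Real.log 2) ∧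
      Tendsto (fun i : ℕ => a i 0) atTop (nhds (2 * Real.log 2)) := by
  refine ⟨fun i s _ => ?_, ?_⟩
  · rw [a_eq_two_mul_log_two_div]
    exact div_lt_self (by positivity) (one_lt_add_one_mul_log_one_add_inv (by positivity))
  · have hk : Tendsto (fun i : ℕ => (2 : ℝ) ^ (i + 1) + 1) atTop atTop :=
      tendsto_atTop_add_const_right _ 1 <|
        (tendsto_pow_atTop_atTop_of_one_lt one_lt_two).comp (tendsto_add_atTop_nat 1)
    simpa [a_eq_two_mul_log_two_div, Function.comp_def, Pi.div_def] using (tendsto_const_nhds (x := 2 * log 2)).div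
      (tendsto_add_one_mul_log_one_add_inv_atTop.comp hk) one_ne_zero
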